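/- For every x ∈ L with ⟨x, E⟩ ≥ 0 for all 27 exceptional classes E, there exists w ∈ W_6 such that w(x) satisfies ⟨w(x), r_i⟩ ≥ 0 for all 0 ≤ i ≤ 5 and ⟨w(x), e_6⟩ ≥ 0. That is, every Weyl orbit of a class in the dual cone of the exceptional classes meets the fundamental domain A. -/

import Mathlib

/-!
The Weyl group acts by isometries fixing `κ`, so it permutes the exceptional classes and preserves
their dual cone. On that cone the height `⟨y, ρ⟩`, with `ρ = e₁ + 2e₂ + ⋯ + 6e₆`, is a nonnegative
combination of the pairings `⟨y, eₖ⟩`, and every simple root has `⟨rᵢ, ρ⟩ ≥ 1`. Hence reflecting in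
a simple root with `⟨y, rᵢ⟩ < 0` strictly lowers the height, and this descent ends in the
fundamental chamber. The extra condition `⟨w x, e₆⟩ ≥ 0` holds because `e₆` is exceptional.
-/

/-- The intersection form on the divisor class lattice `L = Fin 7 → ℤ`:
`⟨x, y⟩ = x₀y₀ − x₁y₁ − ⋯ − x₆y₆`. -/
def form (x y : Fin 7 → ℤ) : ℤ :=
  x 0 * y 0 - x 1 * y 1 - x 2 * y 2 - x 3 * y 3 - x 4 * y 4 - x 5 * y 5 - x 6 * y 6

/-- The standard basis vectors `e 0, …, e 6` of `L`. -/
def e (i : Fin 7) : Fin 7 → ℤ := fun j => if j = i then 1 else 0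

/-- The anticanonical class `κ = 3e₀ − e₁ − ⋯ − e₆`. -/
def kappa : Fin 7 → ℤ := (3 : ℤ) • e 0 - e 1 - e 2 - e 3 - e 4 - e 5 - e 6

/-- The simple roots `r₀ = e₀ − e₁ − e₂ − e₃` and `rᵢ = eᵢ − e_{i+1}` for `1 ≤ i ≤ 5`. -/
def r : Fin 6 → (Fin 7 → ℤ) :=
  ![e 0 - e 1 - e 2 - e 3, e 1 - e 2, e 2 - e 3, e 3 - e 4, e 4 - e 5, e 5 - e 6]

lemma form_add_left (x y v : Fin 7 → ℤ) : form (x + y) v = form x v + form y v := by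
  simp only [form, Pi.add_apply]; ring

lemma form_smul_left (c : ℤ) (x v : Fin 7 → ℤ) : form (c • x) v = c * form x v := by
  simp only [form, Pi.smul_apply, smul_eq_mul]; ring

/-- The reflection `x ↦ x + ⟨x, v⟩·v` as a ℤ-linear map. -/
def reflMap (v : Fin 7 → ℤ) : (Fin 7 → ℤ) →ₗ[ℤ] (Fin 7 → ℤ) where
  toFun x := x + form x v • v
  map_add' x y := by
    funext j
    simp only [form, Pi.add_apply, Pi.smul_apply, smul_eq_mul]
    ring
  map_smul' c x := by
    funext j
    simp only [form, Pi.add_apply, Pi.smul_apply, smul_eq_mul, RingHom.id_apply]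
    ring

lemma reflMap_invol (v : Fin 7 → ℤ) (hv : form v v = -2) (x : Fin 7 → ℤ) :
    reflMap v (reflMap v x) = x := by
  show (x + form x v • v) + form (x + form x v • v) v • v = x
  rw [form_add_left, form_smul_left, hv]
  module

/-- The reflection `sᵢ(x) = x + ⟨x, rᵢ⟩·rᵢ` through the simple root `rᵢ`,
as a ℤ-linear automorphism of `L`. -/
def s (i : Fin 6) : (Fin 7 → ℤ) ≃ₗ[ℤ] (Fin 7 → ℤ) :=
  LinearEquiv.ofLinear (reflMap (r i)) (reflMap (r i))
    (LinearMap.ext fun x => reflMap_invol (r i) (by fin_cases i <;> decide) x)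
    (LinearMap.ext fun x => reflMap_invol (r i) (by fin_cases i <;> decide) x)

/-- The Weyl group `W₆`: the subgroup of the group of ℤ-linear automorphisms of `L`
generated by the reflections `s₀, …, s₅`. -/
def W6 : Subgroup ((Fin 7 → ℤ) ≃ₗ[ℤ] (Fin 7 → ℤ)) :=
  Subgroup.closure (Set.range s)

lemma form_symm (x y : Fin 7 → ℤ) : form x y = form y x := by
  simp only [form]; ring

lemma form_add_right (v x y : Fin 7 → ℤ) : form v (x + y) = form v x + form v y := by
  simp only [form, Pi.add_apply]; ring

lemma form_smul_right (c : ℤ) (v x : Fin 7 → ℤ) : form v (c • x) = c * form v x := by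
  simp only [form, Pi.smul_apply, smul_eq_mul]; ring

lemma reflMap_apply (v x : Fin 7 → ℤ) : reflMap v x = x + form x v • v := rfl

lemma form_reflMap_reflMap {v : Fin 7 → ℤ} (hv : form v v = -2) (a b : Fin 7 → ℤ) :
    form (reflMap v a) (reflMap v b) = form a b := by
  simp only [reflMap_apply, form_add_left, form_smul_left, form_add_right, form_smul_right, hv,
    form_symm v b]
  ring

lemma s_apply (i : Fin 6) (y : Fin 7 → ℤ) : s i y = y + form y (r i) • r i := rfl

lemma form_r_self (i : Fin 6) : form (r i) (r i) = -2 := by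
  fin_cases i <;> decide

lemma form_kappa_r (i : Fin 6) : form kappa (r i) = 0 := by
  fin_cases i <;> decide

def kappaIsometries : Subgroup ((Fin 7 → ℤ) ≃ₗ[ℤ] (Fin 7 → ℤ)) where
  carrier := {w | (∀ a b, form (w a) (w b) = form a b) ∧ w kappa = kappa}
  mul_mem' {w w'} hw hw' :=
    ⟨fun a b => (hw.1 _ _).trans (hw'.1 a b), by simp only [LinearEquiv.mul_apply, hw'.2, hw.2]⟩
  one_mem' := ⟨fun _ _ => rfl, rfl⟩
  inv_mem' {w} hw := by
    refine ⟨fun a b => ?_, ?_⟩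
    · rw [← hw.1, LinearEquiv.coe_inv, LinearEquiv.apply_symm_apply,
        LinearEquiv.apply_symm_apply]
    · rw [LinearEquiv.coe_inv, LinearEquiv.symm_apply_eq, hw.2]

lemma s_mem_kappaIsometries (i : Fin 6) : s i ∈ kappaIsometries :=
  ⟨form_reflMap_reflMap (form_r_self i), by rw [s_apply, form_kappa_r, zero_smul, add_zero]⟩

lemma W6_le_kappaIsometries : W6 ≤ kappaIsometries :=
  (Subgroup.closure_le _).mpr <| Set.range_subset_iff.mpr s_mem_kappaIsometries

def NonnegOnExceptional (x : Fin 7 → ℤ) : Prop :=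
  ∀ E : Fin 7 → ℤ, form E E = -1 → form E kappa = 1 → 0 ≤ form x E

lemma NonnegOnExceptional.map {x : Fin 7 → ℤ} (hx : NonnegOnExceptional x)
    {w : (Fin 7 → ℤ) ≃ₗ[ℤ] (Fin 7 → ℤ)} (hw : w ∈ kappaIsometries) :
    NonnegOnExceptional (w x) := by
  have hw' := kappaIsometries.inv_mem hw
  intro E hEE hEκ
  have := hx (w⁻¹ E) (by rw [hw'.1, hEE]) (by rw [← hw'.2, hw'.1, hEκ])
  rwa [← hw.1, ← LinearEquiv.mul_apply, mul_inv_cancel, LinearEquiv.coe_one, id] at this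

def rho : Fin 7 → ℤ := ![0, 1, 2, 3, 4, 5, 6]

lemma one_le_form_r_rho (i : Fin 6) : 1 ≤ form (r i) rho := by
  fin_cases i <;> decide

lemma form_s_rho (i : Fin 6) (y : Fin 7 → ℤ) :
    form (s i y) rho = form y rho + form y (r i) * form (r i) rho := by
  rw [s_apply, form_add_left, form_smul_left]

lemma form_rho_eq_sum (y : Fin 7 → ℤ) : form y rho =
    form y (e 1) + 2 * form y (e 2) + 3 * form y (e 3) + 4 * form y (e 4) + 5 * form y (e 5) +
      6 * form y (e 6) := by
  simp only [form, e, rho, Fin.reduceEq, ↓reduceIte, Matrix.cons_val]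
  ring

lemma NonnegOnExceptional.form_rho_nonneg {y : Fin 7 → ℤ} (hy : NonnegOnExceptional y) :
    0 ≤ form y rho := by
  rw [form_rho_eq_sum]
  have h1 := hy (e 1) (by decide) (by decide)
  have h2 := hy (e 2) (by decide) (by decide)
  have h3 := hy (e 3) (by decide) (by decide)
  have h4 := hy (e 4) (by decide) (by decide)
  have h5 := hy (e 5) (by decide) (by decide)
  have h6 := hy (e 6) (by decide) (by decide)
  omega

lemma NonnegOnExceptional.exists_mem_W6_chamber {y : Fin 7 → ℤ} (hy : NonnegOnExceptional y) :
    ∃ w ∈ W6, ∀ i : Fin 6, 0 ≤ form (w y) (r i) := by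
  induction hn : (form y rho).toNat using Nat.strong_induction_on generalizing y with
  | _ n ih =>
  by_cases hchamber : ∀ i : Fin 6, 0 ≤ form y (r i)
  · exact ⟨1, W6.one_mem, hchamber⟩
  obtain ⟨i, hi⟩ := not_forall.mp hchamber
  have hsy := hy.map (s_mem_kappaIsometries i)
  have hlower : form (s i y) rho < form y rho := by
    rw [form_s_rho]
    nlinarith [one_le_form_r_rho i]
  obtain ⟨w, hw, hwy⟩ := ih _ (by have := hsy.form_rho_nonneg; omega) hsy rfl
  exact ⟨w * s i, W6.mul_mem hw (Subgroup.subset_closure ⟨i, rfl⟩), hwy⟩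

/-- Every Weyl orbit of a class in the dual cone of the exceptional classes
meets the fundamental domain `A`. -/
theorem statement_10 (x : Fin 7 → ℤ)
    (h : ∀ E : Fin 7 → ℤ, form E E = -1 → form E kappa = 1 → 0 ≤ form x E) :
    ∃ w ∈ W6, (∀ i : Fin 6, 0 ≤ form (w x) (r i)) ∧ 0 ≤ form (w x) (e 6) := by
  have hx : NonnegOnExceptional x := h
  obtain ⟨w, hw, hchamber⟩ := hx.exists_mem_W6_chamber
  exact ⟨w, hw, hchamber, hx.map (W6_le_kappaIsometries hw) (e 6) (by decide) (by decide)⟩
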